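/- arXiv:1105.2254 — 3 statements merged into one kernel-verified Lean document; each statement's English description precedes it below -/
import Mathlib

section
/- Fix k > 0 and a constant p ∈ ℝ², and let the vehicle state be frozen at position 0 and heading π/2, so that the measured output is z = R_{−π/2} p and the estimated output is ẑ = R_{−π/2} p̂(t). If p̂ : ℝ → ℝ² is differentiable and satisfies the non-invariant correction dynamics p̂'(t) = −k (ẑ(t) − z), then d/dt ‖p̂(t) − p‖² = 0 for all t; i.e. the estimation error of the landmark does not decrease and the landmark is not correctly estimated. -/
open Real Matrix

/-- The planar rotation matrix `R_θ`. -/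
noncomputable def Rot (θ : ℝ) : Matrix (Fin 2) (Fin 2) ℝ :=
  !![Real.cos θ, -Real.sin θ; Real.sin θ, Real.cos θ]

/-- The action of `R_θ` on `ℝ²` with its Euclidean structure. -/
noncomputable def rotE (θ : ℝ) : EuclideanSpace ℝ (Fin 2) →ₗ[ℝ] EuclideanSpace ℝ (Fin 2) :=
  Matrix.toEuclideanLin (Rot θ)

/-!
The error `e = p̂ - p` obeys `e' = -k R_{-π/2} e`. Since `⟪R_θ v, v⟫ = cos θ ‖v‖²`, a quarter
turn moves every vector orthogonally to itself, so the correction is always tangent to the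
circle `‖e‖ = const`: it rotates the error instead of shrinking it.
-/

theorem inner_rotE_self (θ : ℝ) (v : EuclideanSpace ℝ (Fin 2)) :
    inner ℝ (rotE θ v) v = cos θ * ‖v‖ ^ 2 := by
  simp [rotE, Rot, Matrix.toLpLin_apply, PiLp.inner_apply, EuclideanSpace.real_norm_sq_eq,
    Fin.sum_univ_two, dotProduct]
  ring

theorem hasDerivAt_norm_sq_eq_zero_of_inner_eq_zero {F : Type*} [NormedAddCommGroup F]
    [InnerProductSpace ℝ F] {f : ℝ → F} {f' : F} {t : ℝ} (hf : HasDerivAt f f' t)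
    (horth : inner ℝ (f t) f' = 0) : HasDerivAt (‖f ·‖ ^ 2) 0 t := by
  simpa [horth] using hf.norm_sq

theorem noninvariant_correction_not_converging_general
    (k : ℝ)
    (p : EuclideanSpace ℝ (Fin 2))
    (phat : ℝ → EuclideanSpace ℝ (Fin 2))
    (z : EuclideanSpace ℝ (Fin 2)) (hz : z = rotE (-(π / 2)) p)
    (zhat : ℝ → EuclideanSpace ℝ (Fin 2)) (hzhat : ∀ t, zhat t = rotE (-(π / 2)) (phat t))
    (hdyn : ∀ t, HasDerivAt phat (-k • (zhat t - z)) t) :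
    ∀ t, HasDerivAt (fun s => ‖phat s - p‖ ^ 2) 0 t := by
  intro t
  have herr : HasDerivAt (phat · - p) (-k • rotE (-(π / 2)) (phat t - p)) t := by
    simpa [hzhat, hz, map_sub] using (hdyn t).sub_const p
  refine hasDerivAt_norm_sq_eq_zero_of_inner_eq_zero herr ?_
  rw [real_inner_smul_right, real_inner_comm, inner_rotE_self, cos_neg, cos_pi_div_two]
  ring

/-- **Non-invariant landmark correction fails.**
With the vehicle frozen at position `0`, heading `π/2`, measured output `z = R_{−π/2} p`,
estimated output `ẑ(t) = R_{−π/2} p̂(t)`, and the non-invariant correction dynamics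
`p̂' = −k (ẑ − z)` with `k > 0`, the squared estimation error `‖p̂(t) − p‖²` has zero
derivative: the landmark is not correctly estimated. -/
theorem noninvariant_correction_not_converging
    (k : ℝ) (hk : 0 < k)
    (p : EuclideanSpace ℝ (Fin 2))
    (phat : ℝ → EuclideanSpace ℝ (Fin 2))
    (z : EuclideanSpace ℝ (Fin 2)) (hz : z = rotE (-(π / 2)) p)
    (zhat : ℝ → EuclideanSpace ℝ (Fin 2)) (hzhat : ∀ t, zhat t = rotE (-(π / 2)) (phat t))
    (hdyn : ∀ t, HasDerivAt phat (-k • (zhat t - z)) t) :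
    ∀ t, HasDerivAt (fun s => ‖phat s - p‖ ^ 2) 0 t :=
  noninvariant_correction_not_converging_general k p phat z hz zhat hzhat hdyn
end

section
/- Under the dynamics of the invariant SLAM observer — system ẋ = u R_θ e₁, θ̇ = u v, ṗ_i = 0 and observer θ̂' = u v, x̂' = u R_{θ̂} e₁ — the quantities θ̃ = θ̂ − θ and x̂ − R_{θ̃} x are constant in time: d/dt (θ̂(t) − θ(t)) = 0 and d/dt ( x̂(t) − R_{θ̂(t) − θ(t)} x(t) ) = 0 for all t. -/
open Real Matrix

/-- The first basis vector `e₁ = (1,0)ᵀ` of `ℝ²`. -/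
def e₁ : Fin 2 → ℝ := ![1, 0]

/-! The heading error `θ̂ − θ` has derivative `uv − uv = 0`, so it is a constant `c`.
Then `x̂ − R_c x` has derivative `u R_{θ̂} e₁ − R_c (u R_θ e₁) = u (R_{θ̂} − R_{c + θ}) e₁ = 0`,
because rotations compose additively. -/

lemma Rot_add (a b : ℝ) : Rot (a + b) = Rot a * Rot b := by
  ext i j
  fin_cases i <;> fin_cases j <;>
    simp [Rot, Matrix.mul_apply, Fin.sum_univ_two, Real.cos_add, Real.sin_add] <;> ring

lemma HasDerivAt.const_mulVec {𝕜 : Type*} [NontriviallyNormedField 𝕜] [CompleteSpace 𝕜]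
    {m n : Type*} [Fintype m] [Fintype n] (M : Matrix m n 𝕜) {f : 𝕜 → n → 𝕜} {f' : n → 𝕜}
    {t : 𝕜} (hf : HasDerivAt f f' t) :
    HasDerivAt (fun s => M *ᵥ f s) (M *ᵥ f') t :=
  M.mulVecLin.toContinuousLinearMap.hasFDerivAt.comp_hasDerivAt t hf

lemma exists_eq_const_add_of_hasDerivAt {E : Type*} [NormedAddCommGroup E] [NormedSpace ℝ E]
    {f g f' : ℝ → E} (hf : ∀ t, HasDerivAt f (f' t) t) (hg : ∀ t, HasDerivAt g (f' t) t) :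
    ∃ c, ∀ t, f t = c + g t := by
  have hzero : ∀ t, HasDerivAt (fun s => f s - g s) 0 t := fun t =>
    ((hf t).sub (hg t)).congr_deriv (sub_self _)
  refine ⟨f 0 - g 0, fun t => sub_eq_iff_eq_add.mp ?_⟩
  exact is_const_of_deriv_eq_zero (fun s => (hzero s).differentiableAt)
    (fun s => (hzero s).deriv) t 0

lemma hasDerivAt_sub_Rot_mulVec_eq_zero {x xhat : ℝ → Fin 2 → ℝ} {u θ c t : ℝ}
    (w : Fin 2 → ℝ) (hx : HasDerivAt x (u • Rot θ *ᵥ w) t)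
    (hxhat : HasDerivAt xhat (u • Rot (c + θ) *ᵥ w) t) :
    HasDerivAt (fun s => xhat s - Rot c *ᵥ x s) 0 t := by
  have h := hxhat.sub (hx.const_mulVec (Rot c))
  rwa [mulVec_smul, mulVec_mulVec, ← Rot_add, sub_self] at h

/-- **The invariant state error of the vehicle pose is constant.**
Under the SLAM dynamics `ẋ = u R_θ e₁`, `θ̇ = u v` and the observer propagation
`θ̂' = u v`, `x̂' = u R_{θ̂} e₁`, the quantities `θ̃ = θ̂ − θ` and `x̂ − R_{θ̃} x` are constant:
their time derivatives vanish identically. -/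
theorem invariant_pose_error_constant
    (u v : ℝ → ℝ)
    (x xhat : ℝ → Fin 2 → ℝ) (θ θhat : ℝ → ℝ)
    (hx : ∀ t, HasDerivAt x (u t • (Rot (θ t)).mulVec e₁) t)
    (hθ : ∀ t, HasDerivAt θ (u t * v t) t)
    (hθhat : ∀ t, HasDerivAt θhat (u t * v t) t)
    (hxhat : ∀ t, HasDerivAt xhat (u t • (Rot (θhat t)).mulVec e₁) t) :
    (∀ t, HasDerivAt (fun s => θhat s - θ s) 0 t) ∧
    (∀ t, HasDerivAt (fun s => xhat s - (Rot (θhat s - θ s)).mulVec (x s))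
      (0 : Fin 2 → ℝ) t) := by
  obtain ⟨c, hc⟩ := exists_eq_const_add_of_hasDerivAt hθhat hθ
  have herr : ∀ s, θhat s - θ s = c := fun s => by rw [hc s, add_sub_cancel_right]
  refine ⟨fun t => by simpa only [herr] using hasDerivAt_const t c, fun t => ?_⟩
  simp only [herr]
  exact hasDerivAt_sub_Rot_mulVec_eq_zero e₁ (hx t) (hc t ▸ hxhat t)
end

section
/- For any θ, θ̂ ∈ ℝ and x, x̂, p_i, p̂_i ∈ ℝ², define the invariant state error components θ̃ = θ̂ − θ, x̃ = x̂ − R_{θ̃} x, p̃_i = p̂_i − R_{θ̃} p_i, and the invariant output errors E_i = R_{θ̂}(ẑ_i − z_i) where z_i = R_{−θ}(p_i − x) and ẑ_i = R_{−θ̂}(p̂_i − x̂). Then E_i = p̃_i − x̃ for every i; i.e. the invariant output error is a function of the invariant state error only. -/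
open Real Matrix

theorem Rot_mul_Rot (a b : ℝ) : Rot a * Rot b = Rot (a + b) := by
  ext i j
  fin_cases i <;> fin_cases j <;>
    simp [Rot, Matrix.mul_apply, Real.cos_add, Real.sin_add] <;> ring

theorem Rot_zero : Rot 0 = 1 := by
  ext i j
  fin_cases i <;> fin_cases j <;> simp [Rot]

theorem Rot_mulVec_Rot_mulVec (a b : ℝ) (v : Fin 2 → ℝ) :
    Rot a *ᵥ (Rot b *ᵥ v) = Rot (a + b) *ᵥ v := by
  rw [mulVec_mulVec, Rot_mul_Rot]

theorem Rot_mulVec_sub_Rot_neg_mulVec (φ θ : ℝ) (u v : Fin 2 → ℝ) :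
    Rot φ *ᵥ (Rot (-φ) *ᵥ u - Rot (-θ) *ᵥ v) = u - Rot (φ - θ) *ᵥ v := by
  rw [mulVec_sub, Rot_mulVec_Rot_mulVec, Rot_mulVec_Rot_mulVec, add_neg_cancel, Rot_zero,
    one_mulVec, ← sub_eq_add_neg]

/-- **The invariant output error is a function of the invariant state error only.**
With the invariant state error components `θ̃ = θ̂ − θ`, `x̃ = x̂ − R_{θ̃} x`,
`p̃ᵢ = p̂ᵢ − R_{θ̃} pᵢ` and the invariant output errors `Eᵢ = R_{θ̂}(ẑᵢ − zᵢ)` where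
`zᵢ = R_{−θ}(pᵢ − x)` and `ẑᵢ = R_{−θ̂}(p̂ᵢ − x̂)`, one has `Eᵢ = p̃ᵢ − x̃` for every `i`. -/
theorem invariant_output_error_eq_state_error
    {N : ℕ} (θ θhat : ℝ) (x xhat : Fin 2 → ℝ) (p phat : Fin N → Fin 2 → ℝ)
    (θtil : ℝ) (hθtil : θtil = θhat - θ)
    (xtil : Fin 2 → ℝ) (hxtil : xtil = xhat - (Rot θtil).mulVec x)
    (ptil : Fin N → Fin 2 → ℝ) (hptil : ∀ i, ptil i = phat i - (Rot θtil).mulVec (p i))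
    (z zhat E : Fin N → Fin 2 → ℝ)
    (hz : ∀ i, z i = (Rot (-θ)).mulVec (p i - x))
    (hzhat : ∀ i, zhat i = (Rot (-θhat)).mulVec (phat i - xhat))
    (hE : ∀ i, E i = (Rot θhat).mulVec (zhat i - z i)) :
    ∀ i, E i = ptil i - xtil := by
  intro i
  rw [hE, hzhat, hz, Rot_mulVec_sub_Rot_neg_mulVec, hptil, hxtil, hθtil, mulVec_sub]
  abel
end
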